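/- arXiv:1702.02267 — 2 statements merged into one kernel-verified Lean document; each statement's English description precedes it below -/
import Mathlib

section
/- Let n, k, d be positive integers, μ₀ ≥ 1, β ∈ (0,1), σ₁* > 0. Let Ω ⊆ [n]×[n] be such that for every j ∈ [n] the set S_j = { i : (i,j) ∈ Ω } has exactly d elements. Let U, U* ∈ ℝ^{n×k} be orthonormal, with every row u_i of U satisfying ‖u_i‖₂ ≤ √(5μ₀k/n); set D = UᵀU* and B^j = (n/d)·Σ_{i∈S_j} u_i u_iᵀ. Let V* ∈ ℝ^{n×k} have rows v_j* with ‖v_j*‖₂ ≤ √(μ₀k/n), and let Σ* ∈ ℝ^{k×k} satisfy ‖Σ*‖₂ ≤ σ₁*. Suppose that for every j ∈ [n], B̂^j ∈ ℝ^{k×k} is a symmetric positive definite matrix all of whose eigenvalues lie in [β, 2−β]. Then for every S ⊆ [n] and all row vectors x^1, …, x^n ∈ ℝ^{1×k} with Σ_{j∈[n]} ‖x^j‖₂² = 1, one has Σ_{j∈S} x^j (B̂^j)^{-1} (B̂^j − B^j) D Σ* v_j* ≤ (2 − β + 5μ₀k)·(σ₁*/β)·√(μ₀k)·√(|S|/n).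 -/
open Matrix
open scoped Classical

/-- Euclidean norm of a vector in `ℝ^k`. -/
noncomputable def vecNorm {k : ℕ} (v : Fin k → ℝ) : ℝ := Real.sqrt (∑ i, v i ^ 2)

/-- Spectral norm (largest singular value) of a real matrix. -/
noncomputable def specNorm {m n : ℕ} (A : Matrix (Fin m) (Fin n) ℝ) : ℝ :=
  sSup {c : ℝ | ∃ x : Fin n → ℝ, vecNorm x = 1 ∧ c = vecNorm (A.mulVec x)}

/-- The left neighborhood `S_j = {i : (i,j) ∈ Ω}`. -/
def Sj {n : ℕ} (Ω : Finset (Fin n × Fin n)) (j : Fin n) : Finset (Fin n) :=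
  Finset.univ.filter fun i => (i, j) ∈ Ω

/-! Everything is measured in the spectral norm. By the spectral theorem `‖(B̂^j)⁻¹‖ ≤ 1/β` and
`‖B̂^j‖ ≤ 2 - β`, while each rank-one term `u_i u_iᵀ` has norm `‖u_i‖² ≤ 5μ₀k/n`, so averaging `d`
of them and scaling by `n` gives `‖B^j‖ ≤ 5μ₀k`; `D` is a product of two contractions. Hence the
`j`-th summand is at most `‖x^j‖ (2 - β + 5μ₀k) (σ₁*/β) √(μ₀k/n)`, and Cauchy–Schwarz gives
`∑_{j ∈ S} ‖x^j‖ ≤ √|S|`. -/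

open scoped Matrix.Norms.L2Operator
open Finset WithLp

lemma vecNorm_eq_norm_toLp {k : ℕ} (v : Fin k → ℝ) : vecNorm v = ‖toLp 2 v‖ := by
  simp [vecNorm, EuclideanSpace.norm_eq]

namespace Matrix

variable {𝕜 m n : Type*} [RCLike 𝕜] [Fintype m] [Fintype n]

lemma abs_dotProduct_le (x y : n → ℝ) : |x ⬝ᵥ y| ≤ ‖toLp 2 x‖ * ‖toLp 2 y‖ := by
  simpa [EuclideanSpace.inner_toLp_toLp, dotProduct_comm] using
    abs_real_inner_le_norm (toLp 2 x) (toLp 2 y)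

lemma sum_dotProduct_le_sqrt_card_mul {ι : Type*} [Fintype ι] {x w : ι → n → ℝ}
    (hx : ∑ i, ‖toLp 2 (x i)‖ ^ 2 ≤ 1) {C : ℝ} (hC : 0 ≤ C) (hw : ∀ i, ‖toLp 2 (w i)‖ ≤ C)
    (s : Finset ι) : ∑ i ∈ s, x i ⬝ᵥ w i ≤ √(#s : ℝ) * C := by
  have hcs : (∑ i ∈ s, ‖toLp 2 (x i)‖) ^ 2 ≤ #s := by
    refine sq_sum_le_card_mul_sum_sq.trans (mul_le_of_le_one_right (by positivity) ?_)
    exact (sum_le_univ_sum_of_nonneg fun i => sq_nonneg _).trans hx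
  calc ∑ i ∈ s, x i ⬝ᵥ w i ≤ ∑ i ∈ s, ‖toLp 2 (x i)‖ * C :=
        sum_le_sum fun i _ => (le_abs_self _).trans <| (abs_dotProduct_le _ _).trans <| by
          gcongr
          exact hw i
    _ = (∑ i ∈ s, ‖toLp 2 (x i)‖) * C := (sum_mul _ _ _).symm
    _ ≤ √(#s : ℝ) * C := by
        gcongr
        exact (le_abs_self _).trans (Real.abs_le_sqrt hcs)

variable [DecidableEq n]

lemma norm_toLp_mulVec_le (A : Matrix m n 𝕜) (v : n → 𝕜) :
    ‖toLp 2 (A *ᵥ v)‖ ≤ ‖A‖ * ‖toLp 2 v‖ :=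
  A.l2_opNorm_mulVec (toLp 2 v)

lemma l2_opNorm_le_of_mulVec_le {A : Matrix m n 𝕜} {C : ℝ} (hC : 0 ≤ C)
    (h : ∀ v, ‖toLp 2 (A *ᵥ v)‖ ≤ C * ‖toLp 2 v‖) : ‖A‖ ≤ C :=
  ContinuousLinearMap.opNorm_le_bound _ hC fun v => h v.ofLp

lemma l2_opNorm_le_one_of_conjTranspose_mul_self_eq_one {A : Matrix m n 𝕜} (hA : Aᴴ * A = 1) :
    ‖A‖ ≤ 1 := by
  have hone : ‖(1 : Matrix n n 𝕜)‖ ≤ 1 := by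
    rw [← diagonal_one, l2_opNorm_diagonal]
    exact (pi_norm_le_iff_of_nonneg zero_le_one).2 fun _ => norm_one.le
  have hsq := l2_opNorm_conjTranspose_mul_self A
  rw [hA] at hsq
  nlinarith [norm_nonneg A]

lemma l2_opNorm_transpose_mul_le_one [DecidableEq m] {A B : Matrix m n ℝ} (hA : Aᵀ * A = 1)
    (hB : Bᵀ * B = 1) : ‖Aᵀ * B‖ ≤ 1 := by
  rw [← conjTranspose_eq_transpose_of_trivial] at hA hB ⊢
  calc ‖Aᴴ * B‖ ≤ ‖Aᴴ‖ * ‖B‖ := l2_opNorm_mul _ _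
    _ ≤ 1 := mul_le_one₀
        (l2_opNorm_conjTranspose A ▸ l2_opNorm_le_one_of_conjTranspose_mul_self_eq_one hA)
        (norm_nonneg _) (l2_opNorm_le_one_of_conjTranspose_mul_self_eq_one hB)

lemma l2_opNorm_vecMulVec_le (u : m → ℝ) (w : n → ℝ) :
    ‖vecMulVec u w‖ ≤ ‖toLp 2 u‖ * ‖toLp 2 w‖ :=
  l2_opNorm_le_of_mulVec_le (by positivity) fun v => by
    rw [vecMulVec_mulVec, op_smul_eq_smul, WithLp.toLp_smul, norm_smul, Real.norm_eq_abs,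
      mul_comm, mul_assoc]
    gcongr
    exact abs_dotProduct_le w v

lemma l2_opNorm_sum_vecMulVec_self_le {ι : Type*} (s : Finset ι) (u : ι → n → ℝ) {r : ℝ}
    (hu : ∀ i ∈ s, ‖toLp 2 (u i)‖ ^ 2 ≤ r) : ‖∑ i ∈ s, vecMulVec (u i) (u i)‖ ≤ #s * r :=
  calc ‖∑ i ∈ s, vecMulVec (u i) (u i)‖ ≤ ∑ i ∈ s, ‖vecMulVec (u i) (u i)‖ := norm_sum_le _ _
    _ ≤ ∑ _i ∈ s, r :=
        sum_le_sum fun i hi => (l2_opNorm_vecMulVec_le _ _).trans (sq (‖toLp 2 (u i)‖) ▸ hu i hi)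
    _ = #s * r := by rw [sum_const, nsmul_eq_mul]

lemma l2_opNorm_div_card_smul_sum_vecMulVec_self_le {ι : Type*} (s : Finset ι) (u : ι → n → ℝ)
    {c r : ℝ} (hc : 0 ≤ c) (hr : 0 ≤ r) (hu : ∀ i ∈ s, ‖toLp 2 (u i)‖ ≤ √r) :
    ‖(c / #s) • ∑ i ∈ s, vecMulVec (u i) (u i)‖ ≤ c * r := by
  rw [norm_smul, Real.norm_of_nonneg (by positivity)]
  rcases s.eq_empty_or_nonempty with rfl | hs
  · simp
    positivity
  calc c / #s * ‖∑ i ∈ s, vecMulVec (u i) (u i)‖ ≤ c / #s * (#s * r) := by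
        gcongr
        exact l2_opNorm_sum_vecMulVec_self_le s u fun i hi =>
          (Real.le_sqrt (norm_nonneg _) hr).1 (hu i hi)
    _ = c * r := by
        have : (#s : ℝ) ≠ 0 := by exact_mod_cast hs.card_ne_zero
        field_simp

lemma l2_opNorm_unitary_mul_diagonal_mul_star {U : Matrix n n 𝕜} (hU : U ∈ unitary _)
    (d : n → 𝕜) : ‖U * diagonal d * star U‖ = ‖d‖ := by
  rw [CStarRing.norm_mul_mem_unitary _ (Unitary.star_mem hU), CStarRing.norm_mem_unitary_mul _ hU,
    l2_opNorm_diagonal]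

namespace IsHermitian

variable {A : Matrix n n 𝕜} (hA : A.IsHermitian)

lemma l2_opNorm_le {b : ℝ} (hb : 0 ≤ b) (h : ∀ i, |hA.eigenvalues i| ≤ b) : ‖A‖ ≤ b := by
  conv_lhs => rw [hA.spectral_theorem, Unitary.conjStarAlgAut_apply]
  rw [l2_opNorm_unitary_mul_diagonal_mul_star (SetLike.coe_mem _)]
  exact (pi_norm_le_iff_of_nonneg hb).2 fun i => by simpa using h i

lemma inv_eq_conj_diagonal_inv (hne : ∀ i, hA.eigenvalues i ≠ 0) :
    A⁻¹ = (hA.eigenvectorUnitary : Matrix n n 𝕜) * diagonal (fun i => (hA.eigenvalues i : 𝕜)⁻¹) *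
      star (hA.eigenvectorUnitary : Matrix n n 𝕜) := by
  set U : Matrix n n 𝕜 := ↑hA.eigenvectorUnitary
  have hU : U ∈ unitary _ := SetLike.coe_mem _
  have hdiag : diagonal (fun i => (hA.eigenvalues i : 𝕜)⁻¹) *
      diagonal (RCLike.ofReal ∘ hA.eigenvalues) = 1 := by
    rw [diagonal_mul_diagonal, ← diagonal_one]
    congr 1
    funext i
    simp [hne i]
  refine inv_eq_left_inv ?_
  calc U * diagonal (fun i => (hA.eigenvalues i : 𝕜)⁻¹) * star U * A
      = U * diagonal (fun i => (hA.eigenvalues i : 𝕜)⁻¹) * star U *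
          (U * diagonal (RCLike.ofReal ∘ hA.eigenvalues) * star U) := by
        congr 1
        exact hA.spectral_theorem
    _ = U * (diagonal (fun i => (hA.eigenvalues i : 𝕜)⁻¹) * (star U * U) *
          diagonal (RCLike.ofReal ∘ hA.eigenvalues)) * star U := by noncomm_ring
    _ = 1 := by rw [Unitary.star_mul_self_of_mem hU, mul_one, hdiag, mul_one,
          Unitary.mul_star_self_of_mem hU]

lemma l2_opNorm_inv_le {a : ℝ} (ha : 0 < a) (h : ∀ i, a ≤ hA.eigenvalues i) : ‖A⁻¹‖ ≤ a⁻¹ := by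
  rw [hA.inv_eq_conj_diagonal_inv fun i => (ha.trans_le (h i)).ne',
    l2_opNorm_unitary_mul_diagonal_mul_star (SetLike.coe_mem _)]
  refine (pi_norm_le_iff_of_nonneg (by positivity)).2 fun i => ?_
  rw [norm_inv, RCLike.norm_ofReal, abs_of_pos (ha.trans_le (h i))]
  exact inv_anti₀ ha (h i)

lemma l2_opNorm_inv_mul_sub_le {a b c : ℝ} (ha : 0 < a) (hab : a ≤ b)
    (h : ∀ i, hA.eigenvalues i ∈ Set.Icc a b) {B : Matrix n n 𝕜} (hB : ‖B‖ ≤ c) :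
    ‖A⁻¹ * (A - B)‖ ≤ a⁻¹ * (b + c) :=
  norm_mul_le_of_le (hA.l2_opNorm_inv_le ha fun i => (h i).1) <|
    (norm_sub_le _ _).trans <| add_le_add (hA.l2_opNorm_le (ha.le.trans hab)
      fun i => abs_le.2 ⟨by linarith [(h i).1], (h i).2⟩) hB

end IsHermitian

end Matrix

lemma l2_opNorm_le_of_specNorm_le {m n : ℕ} {A : Matrix (Fin m) (Fin n) ℝ} {σ : ℝ} (hσ : 0 ≤ σ)
    (h : specNorm A ≤ σ) : ‖A‖ ≤ σ := by
  have hbdd : BddAbove {c : ℝ | ∃ x : Fin n → ℝ, vecNorm x = 1 ∧ c = vecNorm (A *ᵥ x)} := by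
    refine ⟨‖A‖, ?_⟩
    rintro _ ⟨x, hx, rfl⟩
    rw [vecNorm_eq_norm_toLp] at hx ⊢
    simpa [hx] using A.norm_toLp_mulVec_le x
  refine Matrix.l2_opNorm_le_of_mulVec_le hσ fun v => ?_
  rcases eq_or_ne v 0 with rfl | hv
  · simp
  have hpos : 0 < ‖toLp 2 v‖ := by simpa using hv
  have hunit : vecNorm (‖toLp 2 v‖⁻¹ • v) = 1 := by
    rw [vecNorm_eq_norm_toLp, WithLp.toLp_smul, norm_smul, norm_inv, norm_norm,
      inv_mul_cancel₀ hpos.ne']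
  have hle := (le_csSup hbdd ⟨_, hunit, rfl⟩).trans h
  rw [mulVec_smul, vecNorm_eq_norm_toLp, WithLp.toLp_smul, norm_smul, norm_inv, norm_norm,
    inv_mul_le_iff₀ hpos] at hle
  linarith

theorem stmt_5_general {n k d : ℕ} (hn : 0 < n)
    (μ₀ β σ₁ : ℝ) (hμ : 1 ≤ μ₀) (hβ : β ∈ Set.Ioo (0 : ℝ) 1) (hσ₁ : 0 < σ₁)
    (Ω : Finset (Fin n × Fin n)) (hΩ : ∀ j : Fin n, (Sj Ω j).card = d)
    (U Ustar : Matrix (Fin n) (Fin k) ℝ)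
    (hU : Uᵀ * U = 1) (hUstar : Ustarᵀ * Ustar = 1)
    (hrows : ∀ i, vecNorm (U i) ≤ Real.sqrt (5 * μ₀ * k / n))
    (Vstar : Matrix (Fin n) (Fin k) ℝ)
    (hVrows : ∀ j, vecNorm (Vstar j) ≤ Real.sqrt (μ₀ * k / n))
    (Sig : Matrix (Fin k) (Fin k) ℝ) (hSig : specNorm Sig ≤ σ₁)
    (Bhat : Fin n → Matrix (Fin k) (Fin k) ℝ)
    (hBherm : ∀ j, (Bhat j).IsHermitian)
    (heig : ∀ j l, (hBherm j).eigenvalues l ∈ Set.Icc β (2 - β))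
    (x : Fin n → Fin k → ℝ) (hx : ∑ j, vecNorm (x j) ^ 2 = 1)
    (S : Finset (Fin n)) :
    ∑ j ∈ S, x j ⬝ᵥ
        (((Bhat j)⁻¹ *
            (Bhat j - ((n : ℝ) / d) • ∑ i ∈ Sj Ω j, vecMulVec (U i) (U i)) *
            (Uᵀ * Ustar) * Sig).mulVec (Vstar j))
      ≤ (2 - β + 5 * μ₀ * k) * (σ₁ / β) * Real.sqrt (μ₀ * k) *
          Real.sqrt ((S.card : ℝ) / n) := by
  obtain ⟨hβ0, hβ1⟩ := hβ
  have hn' : (0 : ℝ) < n := by exact_mod_cast hn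
  simp only [vecNorm_eq_norm_toLp] at hrows hVrows hx
  have hsampled (j : Fin n) :
      ‖((n : ℝ) / d) • ∑ i ∈ Sj Ω j, vecMulVec (U i) (U i)‖ ≤ 5 * μ₀ * k := by
    have := Matrix.l2_opNorm_div_card_smul_sum_vecMulVec_self_le (Sj Ω j) U hn'.le
      (by positivity) fun i _ => hrows i
    rwa [hΩ j, mul_div_cancel₀ _ hn'.ne'] at this
  have hK : 0 ≤ β⁻¹ * (2 - β + 5 * μ₀ * k) * 1 * σ₁ := by
    have : 0 ≤ 2 - β + 5 * μ₀ * k := by nlinarith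
    positivity
  have hop (j : Fin n) : ‖(Bhat j)⁻¹ * (Bhat j - ((n : ℝ) / d) • ∑ i ∈ Sj Ω j,
      vecMulVec (U i) (U i)) * (Uᵀ * Ustar) * Sig‖ ≤ β⁻¹ * (2 - β + 5 * μ₀ * k) * 1 * σ₁ :=
    norm_mul_le_of_le (norm_mul_le_of_le
      ((hBherm j).l2_opNorm_inv_mul_sub_le hβ0 (by linarith) (heig j) (hsampled j))
      (Matrix.l2_opNorm_transpose_mul_le_one hU hUstar)) (l2_opNorm_le_of_specNorm_le hσ₁.le hSig)
  calc _ ≤ √(#S : ℝ) * (β⁻¹ * (2 - β + 5 * μ₀ * k) * 1 * σ₁ * √(μ₀ * k / n)) :=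
        Matrix.sum_dotProduct_le_sqrt_card_mul hx.le (by positivity) (fun j =>
          (Matrix.norm_toLp_mulVec_le _ _).trans
            (mul_le_mul (hop j) (hVrows j) (norm_nonneg _) hK)) S
    _ = _ := by
        rw [Real.sqrt_div' _ hn'.le, Real.sqrt_div' _ hn'.le]
        ring

theorem stmt_5 {n k d : ℕ} (hn : 0 < n) (hk : 0 < k) (hd : 0 < d)
    (μ₀ β σ₁ : ℝ) (hμ : 1 ≤ μ₀) (hβ : β ∈ Set.Ioo (0 : ℝ) 1) (hσ₁ : 0 < σ₁)
    (Ω : Finset (Fin n × Fin n)) (hΩ : ∀ j : Fin n, (Sj Ω j).card = d)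
    (U Ustar : Matrix (Fin n) (Fin k) ℝ)
    (hU : Uᵀ * U = 1) (hUstar : Ustarᵀ * Ustar = 1)
    (hrows : ∀ i, vecNorm (U i) ≤ Real.sqrt (5 * μ₀ * k / n))
    (Vstar : Matrix (Fin n) (Fin k) ℝ)
    (hVrows : ∀ j, vecNorm (Vstar j) ≤ Real.sqrt (μ₀ * k / n))
    (Sig : Matrix (Fin k) (Fin k) ℝ) (hSig : specNorm Sig ≤ σ₁)
    (Bhat : Fin n → Matrix (Fin k) (Fin k) ℝ)
    (hBherm : ∀ j, (Bhat j).IsHermitian)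
    (hBpos : ∀ j, (Bhat j).PosDef)
    (heig : ∀ j l, (hBherm j).eigenvalues l ∈ Set.Icc β (2 - β))
    (x : Fin n → Fin k → ℝ) (hx : ∑ j, vecNorm (x j) ^ 2 = 1)
    (S : Finset (Fin n)) :
    ∑ j ∈ S, x j ⬝ᵥ
        (((Bhat j)⁻¹ *
            (Bhat j - ((n : ℝ) / d) • ∑ i ∈ Sj Ω j, vecMulVec (U i) (U i)) *
            (Uᵀ * Ustar) * Sig).mulVec (Vstar j))
      ≤ (2 - β + 5 * μ₀ * k) * (σ₁ / β) * Real.sqrt (μ₀ * k) *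
          Real.sqrt ((S.card : ℝ) / n) :=
  stmt_5_general hn μ₀ β σ₁ hμ hβ hσ₁ Ω hΩ U Ustar hU hUstar hrows Vstar hVrows Sig hSig Bhat hBherm
    heig x hx S
end

section
/- Let U*, Ū ∈ ℝ^{n×k} be orthonormal matrices. Then there exists an orthogonal matrix R ∈ ℝ^{k×k} (i.e., RᵀR = I_k) such that ‖U* R − Ū‖₂² ≤ 2·dist(Ū, U*)², and consequently ‖U* R − Ū‖_F ≤ √(2k)·dist(Ū, U*). -/
open Matrix

/-- Frobenius norm of a real matrix. -/
noncomputable def frobNorm {m n : ℕ} (A : Matrix (Fin m) (Fin n) ℝ) : ℝ :=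
  Real.sqrt (∑ i, ∑ j, A i j ^ 2)

/-- Subspace distance between the column spaces of two orthonormal matrices. -/
noncomputable def distS {n k : ℕ} (X Y : Matrix (Fin n) (Fin k) ℝ) : ℝ :=
  specNorm (X * Xᵀ - Y * Yᵀ)

/-! Put `W = U*ᵀ Ū` and take its polar decomposition `W = R |W|`, `|W| = (Wᵀ W)^(1/2)`.
Since `Rᵀ W = |W|` is symmetric, `(U* R - Ū)ᵀ (U* R - Ū) = 2 (I - |W|)`. The projector difference
`Ū Ūᵀ - U* U*ᵀ` maps `Ū y` to `(Ū - U* W) y`, whose squared length is `‖y‖² - ‖W y‖²`; hence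
`Wᵀ W ≥ (1 - D²) I` with `D = dist(Ū, U*)`, and because `1 - D² ≤ 1` also `|W| ≥ (1 - D²) I`.
So `‖(U* R - Ū) x‖² ≤ 2 D² ‖x‖²`, and the Frobenius bound follows from `‖A‖_F ≤ √k ‖A‖₂`. -/

lemma dotProduct_self_nonneg {ι : Type*} [Fintype ι] (v : ι → ℝ) : 0 ≤ v ⬝ᵥ v :=
  Finset.sum_nonneg fun i _ => mul_self_nonneg (v i)

lemma mulVec_dotProduct_mulVec_self {m n : Type*} [Fintype m] [Fintype n] (A : Matrix m n ℝ)
    (x : n → ℝ) : (A *ᵥ x) ⬝ᵥ (A *ᵥ x) = x ⬝ᵥ ((Aᵀ * A) *ᵥ x) := by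
  rw [← mulVec_mulVec, dotProduct_mulVec x, vecMul_transpose]

lemma vecNorm_eq_sqrt_dotProduct {k : ℕ} (v : Fin k → ℝ) : vecNorm v = √(v ⬝ᵥ v) := by
  simp only [vecNorm, dotProduct, sq]

lemma vecNorm_nonneg {k : ℕ} (v : Fin k → ℝ) : 0 ≤ vecNorm v := Real.sqrt_nonneg _

lemma vecNorm_sq {k : ℕ} (v : Fin k → ℝ) : vecNorm v ^ 2 = v ⬝ᵥ v := by
  rw [vecNorm_eq_sqrt_dotProduct, Real.sq_sqrt (dotProduct_self_nonneg v)]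

lemma vecNorm_eq_zero {k : ℕ} {v : Fin k → ℝ} : vecNorm v = 0 ↔ v = 0 := by
  rw [vecNorm_eq_sqrt_dotProduct, Real.sqrt_eq_zero (dotProduct_self_nonneg v),
    dotProduct_self_eq_zero]

lemma vecNorm_smul {k : ℕ} (c : ℝ) (v : Fin k → ℝ) : vecNorm (c • v) = |c| * vecNorm v := by
  rw [vecNorm_eq_sqrt_dotProduct, vecNorm_eq_sqrt_dotProduct, dotProduct_smul, smul_dotProduct,
    smul_eq_mul, smul_eq_mul, ← mul_assoc, Real.sqrt_mul (mul_self_nonneg c),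
    Real.sqrt_mul_self_eq_abs]

lemma vecNorm_mulVec_le_frobNorm_mul {m n : ℕ} (A : Matrix (Fin m) (Fin n) ℝ) (x : Fin n → ℝ) :
    vecNorm (A *ᵥ x) ≤ frobNorm A * vecNorm x := by
  rw [vecNorm, vecNorm, frobNorm, ← Real.sqrt_mul (Finset.sum_nonneg fun i _ =>
    Finset.sum_nonneg fun j _ => sq_nonneg (A i j)), Finset.sum_mul]
  gcongr with i
  simpa [mulVec, dotProduct] using Finset.sum_mul_sq_le_sq_mul_sq Finset.univ (A i) x

lemma specNorm_bddAbove {m n : ℕ} (A : Matrix (Fin m) (Fin n) ℝ) :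
    BddAbove {c : ℝ | ∃ x : Fin n → ℝ, vecNorm x = 1 ∧ c = vecNorm (A.mulVec x)} := by
  refine ⟨frobNorm A, ?_⟩
  rintro c ⟨x, hx, rfl⟩
  simpa [hx] using vecNorm_mulVec_le_frobNorm_mul A x

lemma specNorm_nonneg {m n : ℕ} (A : Matrix (Fin m) (Fin n) ℝ) : 0 ≤ specNorm A :=
  Real.sSup_nonneg (by rintro c ⟨x, -, rfl⟩; exact vecNorm_nonneg _)

lemma vecNorm_mulVec_le_specNorm_mul {m n : ℕ} (A : Matrix (Fin m) (Fin n) ℝ) (x : Fin n → ℝ) :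
    vecNorm (A *ᵥ x) ≤ specNorm A * vecNorm x := by
  rcases eq_or_ne x 0 with rfl | hx
  · simp [vecNorm]
  have hpos : 0 < vecNorm x := (vecNorm_nonneg x).lt_of_ne' (vecNorm_eq_zero.not.mpr hx)
  have hunit : vecNorm ((vecNorm x)⁻¹ • x) = 1 := by
    rw [vecNorm_smul, abs_inv, abs_of_pos hpos, inv_mul_cancel₀ hpos.ne']
  have := le_csSup (specNorm_bddAbove A) ⟨_, hunit, rfl⟩
  rw [mulVec_smul, vecNorm_smul, abs_inv, abs_of_pos hpos, inv_mul_le_iff₀ hpos] at this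
  rwa [mul_comm]

lemma specNorm_le_of_forall {m n : ℕ} (A : Matrix (Fin m) (Fin n) ℝ) {c : ℝ} (hc : 0 ≤ c)
    (h : ∀ x, vecNorm (A *ᵥ x) ≤ c * vecNorm x) : specNorm A ≤ c :=
  Real.sSup_le (by rintro b ⟨x, hx, rfl⟩; simpa [hx] using h x) hc

lemma frobNorm_le_sqrt_mul_specNorm {m n : ℕ} (A : Matrix (Fin m) (Fin n) ℝ) :
    frobNorm A ≤ √n * specNorm A := by
  have hcol : ∀ j, vecNorm (A *ᵥ Pi.single j 1) ≤ specNorm A := fun j => by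
    simpa [vecNorm, Pi.single_apply] using vecNorm_mulVec_le_specNorm_mul A (Pi.single j 1)
  calc frobNorm A = √(∑ j, vecNorm (A *ᵥ Pi.single j 1) ^ 2) := by
        rw [frobNorm, Finset.sum_comm]
        refine congrArg _ (Finset.sum_congr rfl fun j _ => ?_)
        rw [vecNorm_sq, mulVec_single_one]
        simp only [dotProduct, col_apply, sq]
    _ ≤ √(∑ _j : Fin n, specNorm A ^ 2) := by
        gcongr with j; exacts [vecNorm_nonneg _, hcol j]
    _ = √n * specNorm A := by
        rw [Finset.sum_const, Finset.card_univ, Fintype.card_fin, nsmul_eq_mul,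
          Real.sqrt_mul (Nat.cast_nonneg n), Real.sqrt_sq (specNorm_nonneg A)]

theorem LinearMap.exists_linearIsometry_apply_eq {𝕜 E V : Type*} [RCLike 𝕜] [AddCommGroup E]
    [Module 𝕜 E] [NormedAddCommGroup V] [InnerProductSpace 𝕜 V] [FiniteDimensional 𝕜 V]
    (f g : E →ₗ[𝕜] V) (h : ∀ x, ‖f x‖ = ‖g x‖) :
    ∃ L : V →ₗᵢ[𝕜] V, ∀ x, L (f x) = g x := by
  have hker : LinearMap.ker f ≤ LinearMap.ker g := fun x hx => by
    rw [LinearMap.mem_ker, ← norm_eq_zero, ← h, norm_eq_zero]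
    exact hx
  let L₀ : LinearMap.range f →ₗ[𝕜] V :=
    (LinearMap.ker f).liftQ g hker ∘ₗ f.quotKerEquivRange.symm.toLinearMap
  have hL₀ : ∀ x, L₀ ⟨f x, LinearMap.mem_range_self f x⟩ = g x := fun x => by
    simp [L₀, LinearMap.quotKerEquivRange_symm_apply_image]
  let L : LinearMap.range f →ₗᵢ[𝕜] V :=
    ⟨L₀, by rintro ⟨_, x, rfl⟩; rw [hL₀, ← h]; rfl⟩
  exact ⟨L.extend, fun x => (L.extend_apply ⟨f x, _⟩).trans (hL₀ x)⟩

namespace Matrix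

open scoped MatrixOrder

variable {𝕜 n : Type*} [RCLike 𝕜] [Fintype n] [DecidableEq n]

lemma norm_toEuclideanCLM_apply_sq (M : Matrix n n 𝕜) (x : EuclideanSpace 𝕜 n) :
    ‖toEuclideanCLM (n := n) (𝕜 := 𝕜) M x‖ ^ 2 =
      RCLike.re (inner 𝕜 x (toEuclideanCLM (n := n) (𝕜 := 𝕜) (Mᴴ * M) x)) := by
  rw [← star_eq_conjTranspose, map_mul, map_star, ContinuousLinearMap.star_eq_adjoint,
    mul_apply_eq_comp, ContinuousLinearMap.adjoint_inner_right, inner_self_eq_norm_sq]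

theorem exists_mem_unitaryGroup_mul_eq_of_conjTranspose_mul_self_eq {A B : Matrix n n 𝕜}
    (h : Aᴴ * A = Bᴴ * B) : ∃ R ∈ unitaryGroup n 𝕜, R * A = B := by
  obtain ⟨L, hL⟩ := LinearMap.exists_linearIsometry_apply_eq
    (toEuclideanCLM (n := n) (𝕜 := 𝕜) A : EuclideanSpace 𝕜 n →ₗ[𝕜] EuclideanSpace 𝕜 n)
    (toEuclideanCLM (n := n) (𝕜 := 𝕜) B) fun x => by
      rw [← sq_eq_sq₀ (norm_nonneg _) (norm_nonneg _)]
      exact (norm_toEuclideanCLM_apply_sq A x).trans (h ▸ (norm_toEuclideanCLM_apply_sq B x).symm)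
  refine ⟨(toEuclideanCLM (n := n) (𝕜 := 𝕜)).symm L.toContinuousLinearMap, ?_, ?_⟩
  · rw [mem_unitaryGroup_iff']
    apply EquivLike.injective (toEuclideanCLM (n := n) (𝕜 := 𝕜))
    rw [map_mul, map_star, StarAlgEquiv.apply_symm_apply, map_one,
      ContinuousLinearMap.star_eq_adjoint]
    exact L.adjoint_comp_self
  · apply EquivLike.injective (toEuclideanCLM (n := n) (𝕜 := 𝕜))
    rw [map_mul, StarAlgEquiv.apply_symm_apply]
    ext1 x
    exact hL x

theorem exists_mem_unitaryGroup_mul_cfcAbs (W : Matrix n n 𝕜) :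
    ∃ R ∈ unitaryGroup n 𝕜, R * CFC.abs W = W :=
  exists_mem_unitaryGroup_mul_eq_of_conjTranspose_mul_self_eq <| by
    rw [← star_eq_conjTranspose, ← star_eq_conjTranspose, (CFC.abs_nonneg W).star_eq,
      CFC.abs_mul_abs]

theorem algebraMap_le_cfcAbs {W : Matrix n n 𝕜} {c : ℝ} (hc : c ≤ 1)
    (h : algebraMap ℝ _ c ≤ star W * W) : algebraMap ℝ _ c ≤ CFC.abs W := by
  rw [CFC.abs, CFC.sqrt_eq_real_sqrt _ (star_mul_self_nonneg W), cfcₙ_eq_cfc]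
  refine algebraMap_le_cfc _ _ _ fun x hx => ?_
  have hcx : c ≤ x := (algebraMap_le_iff_le_spectrum).mp h x hx
  rcases le_or_gt c 0 with hc0 | hc0
  · exact hc0.trans (Real.sqrt_nonneg x)
  · exact Real.le_sqrt_of_sq_le (by nlinarith)

theorem algebraMap_le_iff_forall_dotProduct {M : Matrix n n ℝ} (hM : M.IsHermitian) (c : ℝ) :
    algebraMap ℝ _ c ≤ M ↔ ∀ x, c * (x ⬝ᵥ x) ≤ x ⬝ᵥ (M *ᵥ x) := by
  have hMc : (M - c • 1).IsHermitian := hM.sub (isHermitian_one.smul (IsSelfAdjoint.all c))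
  rw [Algebra.algebraMap_eq_smul_one, le_iff, posSemidef_iff_dotProduct_mulVec, and_iff_right hMc]
  simp only [star_trivial, sub_mulVec, smul_mulVec, one_mulVec, dotProduct_sub,
    dotProduct_smul, smul_eq_mul, sub_nonneg]

end Matrix

open scoped MatrixOrder in
theorem algebraMap_one_sub_distS_sq_le {n k : ℕ} {X Y : Matrix (Fin n) (Fin k) ℝ}
    (hX : Xᵀ * X = 1) (hY : Yᵀ * Y = 1) :
    algebraMap ℝ _ (1 - distS Y X ^ 2) ≤ (Xᵀ * Y)ᵀ * (Xᵀ * Y) := by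
  set W := Xᵀ * Y
  have hW : (Wᵀ * W).IsHermitian := by
    simpa [conjTranspose_eq_transpose_of_trivial] using isHermitian_conjTranspose_mul_self W
  rw [algebraMap_le_iff_forall_dotProduct hW]
  intro y
  have hgram : (Y - X * W)ᵀ * (Y - X * W) = 1 - Wᵀ * W := by
    simp only [W, transpose_sub, transpose_mul, transpose_transpose, Matrix.sub_mul,
      Matrix.mul_sub, Matrix.mul_assoc]
    rw [← Matrix.mul_assoc Xᵀ X, hX, Matrix.one_mul, hY]
    abel
  have hproj : (Y * Yᵀ - X * Xᵀ) *ᵥ (Y *ᵥ y) = (Y - X * W) *ᵥ y := by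
    rw [mulVec_mulVec, Matrix.sub_mul, Matrix.mul_assoc, hY, Matrix.mul_one, Matrix.mul_assoc]
  have hisom : vecNorm (Y *ᵥ y) = vecNorm y := by
    rw [vecNorm_eq_sqrt_dotProduct, vecNorm_eq_sqrt_dotProduct, mulVec_dotProduct_mulVec_self, hY,
      one_mulVec]
  have hle : vecNorm ((Y * Yᵀ - X * Xᵀ) *ᵥ (Y *ᵥ y)) ≤ distS Y X * vecNorm (Y *ᵥ y) :=
    vecNorm_mulVec_le_specNorm_mul _ _
  rw [hproj, hisom] at hle
  have hsq := pow_le_pow_left₀ (vecNorm_nonneg _) hle 2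
  rw [mul_pow, vecNorm_sq, vecNorm_sq, mulVec_dotProduct_mulVec_self, hgram, sub_mulVec,
    one_mulVec, dotProduct_sub] at hsq
  linarith

open scoped MatrixOrder in
theorem exists_orthogonal_vecNorm_mul_sub_mulVec_le_distS {n k : ℕ} {X Y : Matrix (Fin n) (Fin k) ℝ}
    (hX : Xᵀ * X = 1) (hY : Yᵀ * Y = 1) :
    ∃ R : Matrix (Fin k) (Fin k) ℝ, Rᵀ * R = 1 ∧
      ∀ x, vecNorm ((X * R - Y) *ᵥ x) ≤ √2 * distS Y X * vecNorm x := by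
  set W := Xᵀ * Y
  set P := CFC.abs W
  obtain ⟨R, hR, hRP⟩ := exists_mem_unitaryGroup_mul_cfcAbs W
  rw [mem_unitaryGroup_iff', star_eq_conjTranspose, conjTranspose_eq_transpose_of_trivial] at hR
  have hP : P.IsHermitian := (CFC.abs_nonneg W).posSemidef.1
  have hPt : Pᵀ = P := by rw [← conjTranspose_eq_transpose_of_trivial, hP.eq]
  have hRW : Rᵀ * W = P := by rw [← hRP, ← Matrix.mul_assoc, hR, Matrix.one_mul]
  have hgram : (X * R - Y)ᵀ * (X * R - Y) = 2 • (1 - P) := by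
    have hWR : Yᵀ * X * R = P := by
      rw [show Yᵀ * X = Wᵀ by simp [W], ← hPt, ← hRW, transpose_mul Rᵀ W, transpose_transpose]
    simp only [transpose_sub, transpose_mul, Matrix.sub_mul, Matrix.mul_sub, Matrix.mul_assoc]
    rw [← Matrix.mul_assoc Xᵀ X, hX, Matrix.one_mul, hR, hY, ← Matrix.mul_assoc Yᵀ X, hWR, hRW]
    abel
  have hPbound : ∀ x, (1 - distS Y X ^ 2) * (x ⬝ᵥ x) ≤ x ⬝ᵥ (P *ᵥ x) := by
    refine (algebraMap_le_iff_forall_dotProduct hP _).mp (algebraMap_le_cfcAbs ?_ ?_)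
    · linarith [sq_nonneg (distS Y X)]
    · rw [star_eq_conjTranspose, conjTranspose_eq_transpose_of_trivial]
      exact algebraMap_one_sub_distS_sq_le hX hY
  refine ⟨R, hR, fun x => ?_⟩
  have hD : 0 ≤ √2 * distS Y X := mul_nonneg (Real.sqrt_nonneg 2) (specNorm_nonneg _)
  refine le_of_pow_le_pow_left₀ two_ne_zero (mul_nonneg hD (vecNorm_nonneg x)) ?_
  rw [mul_pow, mul_pow, Real.sq_sqrt zero_le_two, vecNorm_sq, vecNorm_sq,
    mulVec_dotProduct_mulVec_self, hgram, smul_mulVec, sub_mulVec, one_mulVec, dotProduct_smul,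
    dotProduct_sub, nsmul_eq_mul, Nat.cast_ofNat]
  linarith [hPbound x]

theorem stmt_8 {n k : ℕ} (Ustar Ubar : Matrix (Fin n) (Fin k) ℝ)
    (hUstar : Ustarᵀ * Ustar = 1) (hUbar : Ubarᵀ * Ubar = 1) :
    ∃ R : Matrix (Fin k) (Fin k) ℝ, Rᵀ * R = 1 ∧
      specNorm (Ustar * R - Ubar) ^ 2 ≤ 2 * distS Ubar Ustar ^ 2 ∧
      frobNorm (Ustar * R - Ubar) ≤ Real.sqrt (2 * k) * distS Ubar Ustar := by
  obtain ⟨R, hR, hE⟩ := exists_orthogonal_vecNorm_mul_sub_mulVec_le_distS hUstar hUbar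
  have hspec : specNorm (Ustar * R - Ubar) ≤ √2 * distS Ubar Ustar :=
    specNorm_le_of_forall _ (mul_nonneg (Real.sqrt_nonneg 2) (specNorm_nonneg _)) hE
  refine ⟨R, hR, ?_, ?_⟩
  · calc specNorm (Ustar * R - Ubar) ^ 2 ≤ (√2 * distS Ubar Ustar) ^ 2 :=
          pow_le_pow_left₀ (specNorm_nonneg _) hspec 2
      _ = 2 * distS Ubar Ustar ^ 2 := by rw [mul_pow, Real.sq_sqrt zero_le_two]
  · calc frobNorm (Ustar * R - Ubar) ≤ √k * specNorm (Ustar * R - Ubar) :=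
          frobNorm_le_sqrt_mul_specNorm _
      _ ≤ √k * (√2 * distS Ubar Ustar) := by gcongr
      _ = √(2 * k) * distS Ubar Ustar := by rw [Real.sqrt_mul zero_le_two]; ring
end
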